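/- Any two optimal rate–payment pairs have equal total utility: for every optimal (r,p) and every optimal (r̃,p̃), ∑_{i∈N} u_i(r,p) = ∑_{i∈N} u_i(r̃,p̃) = ∑_{i∈N} |X̄_i| − r*_N, where r*_N = min{r̃_N : r̃ ∈ 𝓡_N} is the minimum sum-rate over all N-omniscience-achieving rate vectors. -/
import Mathlib


/- Setting: `n` users, `k` packets. `X i` is the initial packet set of user `i`,
`Xbar X i` its complement. Coalitions, rate vectors in `𝓡_S`, payment matrices in `𝒫_S`,
utilities, rationality, feasibility (stability of the grand coalition) and optimality,
as in "A Monetary Mechanism for Stabilizing Cooperative Data Exchange with Selfish Users". -/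

noncomputable section

/-- `S` is a coalition: the users in `S` collectively know all packets. -/
def isCoalition {n k : ℕ} (X : Fin n → Finset (Fin k)) (S : Finset (Fin n)) : Prop :=
  ∀ x : Fin k, ∃ i ∈ S, x ∈ X i

/-- The set `X̄_i` of packets wanted by user `i`. -/
def Xbar {n k : ℕ} (X : Fin n → Finset (Fin k)) (i : Fin n) : Finset (Fin k) :=
  (X i)ᶜ

/-- `|⋂_{j ∈ T} X̄_j|`. -/
def cutCard {n k : ℕ} (X : Fin n → Finset (Fin k)) (T : Finset (Fin n)) : ℕ :=
  (Finset.univ.filter fun x : Fin k => ∀ j ∈ T, x ∈ Xbar X j).card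

/-- The sum-rate `r_S`. -/
def rSum {n : ℕ} (S : Finset (Fin n)) (r : Fin n → ℕ) : ℕ := ∑ i ∈ S, r i

/-- `r ∈ 𝓡_S`: `r i = 0` off `S`, and the cut-set conditions
`∑_{i ∈ S̃} r_i ≥ |⋂_{j ∈ S∖S̃} X̄_j|` for all nonempty `S̃ ⊊ S`. -/
def rateOK {n k : ℕ} (X : Fin n → Finset (Fin k)) (S : Finset (Fin n)) (r : Fin n → ℕ) : Prop :=
  (∀ i ∉ S, r i = 0) ∧
  ∀ T : Finset (Fin n), T.Nonempty → T ⊂ S → cutCard X (S \ T) ≤ rSum T r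

/-- `p` is a payment matrix: nonnegative entries and zero diagonal. -/
def isPayMatrix {n : ℕ} (p : Fin n → Fin n → ℝ) : Prop :=
  (∀ i j, 0 ≤ p i j) ∧ ∀ i, p i i = 0

/-- `p ∈ 𝒫_S`: no payments between `S` and its complement. -/
def payOK {n : ℕ} (S : Finset (Fin n)) (p : Fin n → Fin n → ℝ) : Prop :=
  ∀ i ∈ S, ∀ j ∉ S, p i j = 0 ∧ p j i = 0

/-- Total incoming payment `p⁺_i = ∑_{j ≠ i} p_{j,i}`. -/
def pPlus {n : ℕ} (p : Fin n → Fin n → ℝ) (i : Fin n) : ℝ := ∑ j ∈ Finset.univ.erase i, p j i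

/-- Total outgoing payment `p⁻_i = ∑_{j ≠ i} p_{i,j}`. -/
def pMinus {n : ℕ} (p : Fin n → Fin n → ℝ) (i : Fin n) : ℝ := ∑ j ∈ Finset.univ.erase i, p i j

/-- The sum-payment `p_S = ∑_{i,j ∈ S} p_{i,j}`. -/
def pSum {n : ℕ} (S : Finset (Fin n)) (p : Fin n → Fin n → ℝ) : ℝ := ∑ i ∈ S, ∑ j ∈ S, p i j

/-- Utility `u_i(r,p) = (p⁺_i − r_i) + (|X̄_i| − p⁻_i)`. -/
def util {n k : ℕ} (X : Fin n → Finset (Fin k)) (r : Fin n → ℕ) (p : Fin n → Fin n → ℝ)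
    (i : Fin n) : ℝ :=
  (pPlus p i - (r i : ℝ)) + (((Xbar X i).card : ℝ) - pMinus p i)

/-- Rationality: `p⁺_i ≥ r_i` and `p⁻_i ≤ |X̄_i|` for all `i ∈ S`. -/
def rational {n k : ℕ} (X : Fin n → Finset (Fin k)) (S : Finset (Fin n)) (r : Fin n → ℕ)
    (p : Fin n → Fin n → ℝ) : Prop :=
  ∀ i ∈ S, (r i : ℝ) ≤ pPlus p i ∧ pMinus p i ≤ ((Xbar X i).card : ℝ)

/-- Feasibility: `(r,p)` is a rational pair with `r ∈ 𝓡_N`, `p ∈ 𝒫_N`, and no minor coalition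
`S` has a rational pair `(r',p')` with `r' ∈ 𝓡_S`, `p' ∈ 𝒫_S` that Pareto-dominates
`(r,p)` for the users of `S`. -/
def feasible {n k : ℕ} (X : Fin n → Finset (Fin k)) (r : Fin n → ℕ)
    (p : Fin n → Fin n → ℝ) : Prop :=
  rateOK X Finset.univ r ∧ isPayMatrix p ∧ payOK Finset.univ p ∧
  rational X Finset.univ r p ∧
  ¬ ∃ (S : Finset (Fin n)) (r' : Fin n → ℕ) (p' : Fin n → Fin n → ℝ),
      S ⊂ Finset.univ ∧ isCoalition X S ∧ rateOK X S r' ∧ isPayMatrix p' ∧ payOK S p' ∧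
      rational X S r' p' ∧
      (∀ i ∈ S, util X r p i ≤ util X r' p' i) ∧
      ∃ i ∈ S, util X r p i < util X r' p' i

/-- Optimality: feasible, and no feasible pair has strictly smaller sum-rate or
strictly smaller sum-payment. -/
def optimal {n k : ℕ} (X : Fin n → Finset (Fin k)) (r : Fin n → ℕ)
    (p : Fin n → Fin n → ℝ) : Prop :=
  feasible X r p ∧
  ¬ ∃ (r' : Fin n → ℕ) (p' : Fin n → Fin n → ℝ),
      feasible X r' p' ∧
      (rSum Finset.univ r' < rSum Finset.univ r ∨ pSum Finset.univ p' < pSum Finset.univ p)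

end

open Finset

private lemma sum_if_ne {n : ℕ} (f : Fin n → ℝ) (c : Fin n) :
    ∑ j, (if j = c then 0 else f j) = (∑ j, f j) - f c := by
  have h1 : ∑ j, ((if j = c then f j else 0) + (if j = c then 0 else f j)) = ∑ j, f j := by
    apply Finset.sum_congr rfl; intro j _; by_cases h : j = c <;> simp [h]
  rw [Finset.sum_add_distrib, Finset.sum_ite_eq' Finset.univ c f] at h1
  simp only [Finset.mem_univ, if_true] at h1
  linarith

/-- Tight-case transport: if `ρ l + κ l = M`, an explicit hub matrix works. -/
lemma transport_tight {n : ℕ} (ρ κ : Fin n → ℝ) (hρ : ∀ i, 0 ≤ ρ i) (hκ : ∀ i, 0 ≤ κ i)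
    (hsum : ∑ i, ρ i = ∑ i, κ i) (l : Fin n) (hl : ρ l + κ l = ∑ i, ρ i) :
    ∃ p : Fin n → Fin n → ℝ, (∀ i j, 0 ≤ p i j) ∧ (∀ i, p i i = 0) ∧
      (∀ i, ∑ j, p i j = ρ i) ∧ (∀ j, ∑ i, p i j = κ j) := by
  refine ⟨fun a b => if a = b then 0 else if a = l then κ b else if b = l then ρ a else 0,
    ?_, ?_, ?_, ?_⟩
  · intro i j
    dsimp only
    by_cases h1 : i = j
    · simp [h1]
    · rw [if_neg h1]
      by_cases h2 : i = l
      · rw [if_pos h2]; exact hκ j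
      · rw [if_neg h2]
        by_cases h3 : j = l
        · rw [if_pos h3]; exact hρ i
        · rw [if_neg h3]
  · intro i; simp
  · intro a
    by_cases ha : a = l
    · have key : ∀ j, (if a = j then (0:ℝ) else if a = l then κ j else if j = l then ρ a else 0)
          = (if j = l then 0 else κ j) := by
        intro j
        by_cases h : j = l
        · rw [if_pos h, if_pos (ha.trans h.symm), if_pos h]
        · have haj : a ≠ j := by rw [ha]; exact fun hh => h hh.symm
          rw [if_neg haj, if_pos ha, if_neg h]
      rw [Finset.sum_congr rfl (fun j _ => key j), sum_if_ne]
      rw [ha]; linarith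
    · have key : ∀ j, (if a = j then (0:ℝ) else if a = l then κ j else if j = l then ρ a else 0)
          = (if j = l then ρ a else 0) := by
        intro j
        by_cases h : j = l
        · have haj : a ≠ j := fun hh => ha (hh.trans h)
          rw [if_neg haj, if_neg ha, if_pos h]
        · rw [if_neg h]
          by_cases h2 : a = j
          · rw [if_pos h2]
          · rw [if_neg h2, if_neg ha]
      rw [Finset.sum_congr rfl (fun j _ => key j), Finset.sum_ite_eq' Finset.univ l]
      simp
  · intro b
    by_cases hb : b = l
    · have key : ∀ a, (if a = b then (0:ℝ) else if a = l then κ b else if b = l then ρ a else 0)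
          = (if a = l then 0 else ρ a) := by
        intro a
        by_cases h : a = l
        · rw [if_pos (h.trans hb.symm), if_pos h]
        · have hab : a ≠ b := fun hh => h (hh.trans hb)
          rw [if_neg hab, if_neg h, if_pos hb, if_neg h]
      rw [Finset.sum_congr rfl (fun a _ => key a), sum_if_ne]
      rw [hb]; linarith
    · have key : ∀ a, (if a = b then (0:ℝ) else if a = l then κ b else if b = l then ρ a else 0)
          = (if a = l then κ b else 0) := by
        intro a
        by_cases h : a = l
        · have hab : a ≠ b := fun hh => hb (hh.symm.trans h)
          rw [if_neg hab, if_pos h, if_pos h]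
        · rw [if_neg h]
          by_cases h2 : a = b
          · rw [if_pos h2, if_neg h]
          · rw [if_neg h2, if_neg hb, if_neg h]
      rw [Finset.sum_congr rfl (fun a _ => key a), Finset.sum_ite_eq' Finset.univ l]
      simp

private lemma transport_zero {n : ℕ} (ρ κ : Fin n → ℝ) (hz : ∀ i, ρ i = 0)
    (hκ : ∀ i, 0 ≤ κ i) (hsum : ∑ i, ρ i = ∑ i, κ i) :
    ∃ p : Fin n → Fin n → ℝ, (∀ i j, 0 ≤ p i j) ∧ (∀ i, p i i = 0) ∧
      (∀ i, ∑ j, p i j = ρ i) ∧ (∀ j, ∑ i, p i j = κ j) := by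
  have hκ0 : ∀ i ∈ Finset.univ, κ i = 0 := by
    rw [← Finset.sum_eq_zero_iff_of_nonneg (fun i _ => hκ i)]
    rw [← hsum]
    exact Finset.sum_eq_zero (fun i _ => hz i)
  exact ⟨fun _ _ => 0, fun _ _ => le_refl 0, fun _ => rfl,
    fun i => by simp [hz i], fun j => by simp [hκ0 j (Finset.mem_univ j)]⟩

private lemma add_edge {n : ℕ} (ρ κ : Fin n → ℝ) (i j : Fin n) (hij : j ≠ i) (t : ℝ)
    (ht : 0 ≤ t) (p' : Fin n → Fin n → ℝ)
    (hp'nn : ∀ a b, 0 ≤ p' a b) (hp'diag : ∀ a, p' a a = 0)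
    (hp'row : ∀ a, ∑ b, p' a b = Function.update ρ i (ρ i - t) a)
    (hp'col : ∀ b, ∑ a, p' a b = Function.update κ j (κ j - t) b) :
    ∃ p : Fin n → Fin n → ℝ, (∀ a b, 0 ≤ p a b) ∧ (∀ a, p a a = 0) ∧
      (∀ a, ∑ b, p a b = ρ a) ∧ (∀ b, ∑ a, p a b = κ b) := by
  refine ⟨fun a b => p' a b + if a = i ∧ b = j then t else 0, ?_, ?_, ?_, ?_⟩
  · intro a b
    by_cases h : a = i ∧ b = j
    · simp only [h.1, h.2, and_self, if_true]
      linarith [hp'nn i j]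
    · simp only [h, if_false]
      simpa using hp'nn a b
  · intro a
    have hne : ¬(a = i ∧ a = j) := fun ⟨h1, h2⟩ => hij (h2.symm.trans h1)
    simp [hp'diag a, hne]
  · intro a
    rw [Finset.sum_add_distrib, hp'row a]
    by_cases ha : a = i
    · have h1 : ∑ b, (if a = i ∧ b = j then t else 0) = t := by
        have key : ∀ b, (if a = i ∧ b = j then t else 0) = (if b = j then t else 0) := by
          intro b; by_cases hb : b = j <;> simp [hb, ha]
        rw [Finset.sum_congr rfl (fun b _ => key b), Finset.sum_ite_eq' Finset.univ j]
        simp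
      rw [h1, ha, Function.update_self]; ring
    · have h1 : ∑ b, (if a = i ∧ b = j then t else 0) = 0 := by
        apply Finset.sum_eq_zero; intro b _; simp [ha]
      rw [h1, Function.update_of_ne ha]; ring
  · intro b
    rw [Finset.sum_add_distrib, hp'col b]
    by_cases hb : b = j
    · have h1 : ∑ a, (if a = i ∧ b = j then t else 0) = t := by
        have key : ∀ a, (if a = i ∧ b = j then t else 0) = (if a = i then t else 0) := by
          intro a; by_cases ha : a = i <;> simp [hb, ha]
        rw [Finset.sum_congr rfl (fun a _ => key a), Finset.sum_ite_eq' Finset.univ i]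
        simp
      rw [h1, hb, Function.update_self]; ring
    · have h1 : ∑ a, (if a = i ∧ b = j then t else 0) = 0 := by
        apply Finset.sum_eq_zero; intro a _; simp [hb]
      rw [h1, Function.update_of_ne hb]; ring

private lemma transport_aux : ∀ (d : ℕ) {n : ℕ} (ρ κ : Fin n → ℝ),
    (Finset.univ.filter (fun i => ρ i ≠ 0)).card
      + (Finset.univ.filter (fun i => κ i ≠ 0)).card ≤ d →
    (∀ i, 0 ≤ ρ i) → (∀ i, 0 ≤ κ i) → ∑ i, ρ i = ∑ i, κ i →
    (∀ i, ρ i + κ i ≤ ∑ i, ρ i) →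
    ∃ p : Fin n → Fin n → ℝ, (∀ i j, 0 ≤ p i j) ∧ (∀ i, p i i = 0) ∧
      (∀ i, ∑ j, p i j = ρ i) ∧ (∀ j, ∑ i, p i j = κ j) := by
  intro d
  induction d with
  | zero =>
    intro n ρ κ hcard hρ hκ hsum hle
    apply transport_zero ρ κ _ hκ hsum
    intro i
    by_contra hzi
    have : i ∈ Finset.univ.filter (fun i => ρ i ≠ 0) := by simp [hzi]
    have := Finset.card_pos.mpr ⟨i, this⟩
    omega
  | succ d ih =>
    intro n ρ κ hcard hρ hκ hsum hle
    by_cases hz : ∀ i, ρ i = 0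
    · exact transport_zero ρ κ hz hκ hsum
    · push_neg at hz
      obtain ⟨i, hi⟩ := hz
      by_cases htight : ∃ l, ρ l + κ l = ∑ i, ρ i
      · obtain ⟨l, hl⟩ := htight
        exact transport_tight ρ κ hρ hκ hsum l hl
      · push_neg at htight
        have hstrict : ∀ l, ρ l + κ l < ∑ i, ρ i := fun l => lt_of_le_of_ne (hle l) (htight l)
        have hj : ∃ j, j ≠ i ∧ κ j ≠ 0 := by
          by_contra h
          push_neg at h
          have hsκ : ∑ j, κ j = κ i :=
            Finset.sum_eq_single i (fun b _ hb => h b hb) (by simp)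
          have := hstrict i
          rw [hsum, hsκ] at this
          have := hρ i
          linarith
        obtain ⟨j, hji, hjκ⟩ := hj
        have hjκ' : 0 < κ j := lt_of_le_of_ne (hκ j) (Ne.symm hjκ)
        have hiρ : 0 < ρ i := lt_of_le_of_ne (hρ i) (Ne.symm hi)
        set M := ∑ i, ρ i with hM
        set s := (Finset.univ.erase i).erase j with hs
        set m0 := min (ρ i) (κ j) with hm0
        have hm0pos : 0 < m0 := lt_min hiρ hjκ'
        by_cases hex : ∃ l ∈ s, M - ρ l - κ l < m0
        · -- cap binds strictly before m0: one step creates a tight index, finish explicitly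
          obtain ⟨lw, hlw, hltw⟩ := hex
          obtain ⟨l₀, hl₀s, hl₀min⟩ :=
            Finset.exists_min_image s (fun l => M - ρ l - κ l) ⟨lw, hlw⟩
          set t := M - ρ l₀ - κ l₀ with htdef
          have hl₀j : l₀ ≠ j := (Finset.mem_erase.mp hl₀s).1
          have hl₀i : l₀ ≠ i := (Finset.mem_erase.mp (Finset.mem_erase.mp hl₀s).2).1
          have ht0 : 0 < t := by have := hstrict l₀; simp only [htdef]; linarith
          have htm : t < m0 := lt_of_le_of_lt (hl₀min lw hlw) hltw
          have hti : t < ρ i := lt_of_lt_of_le htm (min_le_left _ _)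
          have htj : t < κ j := lt_of_lt_of_le htm (min_le_right _ _)
          set ρ' := Function.update ρ i (ρ i - t) with hρ'def
          set κ' := Function.update κ j (κ j - t) with hκ'def
          have hρ'sum : ∑ x, ρ' x = M - t := by
            rw [hρ'def, Finset.sum_update_of_mem (Finset.mem_univ i),
              Finset.sdiff_singleton_eq_erase,
              Finset.sum_erase_eq_sub (Finset.mem_univ i)]
            rw [hM]; ring
          have hκ'sum : ∑ x, κ' x = M - t := by
            rw [hκ'def, Finset.sum_update_of_mem (Finset.mem_univ j),
              Finset.sdiff_singleton_eq_erase,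
              Finset.sum_erase_eq_sub (Finset.mem_univ j)]
            rw [← hsum]; ring
          have hρ'nn : ∀ x, 0 ≤ ρ' x := by
            intro x
            by_cases hx : x = i
            · subst hx; rw [hρ'def, Function.update_self]; linarith
            · rw [hρ'def, Function.update_of_ne hx]; exact hρ x
          have hκ'nn : ∀ x, 0 ≤ κ' x := by
            intro x
            by_cases hx : x = j
            · subst hx; rw [hκ'def, Function.update_self]; linarith
            · rw [hκ'def, Function.update_of_ne hx]; exact hκ x
          have htight' : ρ' l₀ + κ' l₀ = ∑ x, ρ' x := by
            rw [hρ'sum, hρ'def, hκ'def, Function.update_of_ne hl₀i,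
              Function.update_of_ne hl₀j]
            simp only [htdef]; ring
          obtain ⟨p', hp'nn, hp'diag, hp'row, hp'col⟩ :=
            transport_tight ρ' κ' hρ'nn hκ'nn (hρ'sum.trans hκ'sum.symm) l₀ htight'
          rw [hρ'def] at hp'row
          rw [hκ'def] at hp'col
          exact add_edge ρ κ i j hji t (le_of_lt ht0) p' hp'nn hp'diag hp'row hp'col
        · push_neg at hex
          set t := m0 with htdef
          have hti : t ≤ ρ i := min_le_left _ _
          have htj : t ≤ κ j := min_le_right _ _
          set ρ' := Function.update ρ i (ρ i - t) with hρ'def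
          set κ' := Function.update κ j (κ j - t) with hκ'def
          have hρ'sum : ∑ x, ρ' x = M - t := by
            rw [hρ'def, Finset.sum_update_of_mem (Finset.mem_univ i),
              Finset.sdiff_singleton_eq_erase,
              Finset.sum_erase_eq_sub (Finset.mem_univ i)]
            rw [hM]; ring
          have hκ'sum : ∑ x, κ' x = M - t := by
            rw [hκ'def, Finset.sum_update_of_mem (Finset.mem_univ j),
              Finset.sdiff_singleton_eq_erase,
              Finset.sum_erase_eq_sub (Finset.mem_univ j)]
            rw [← hsum]; ring
          have hρ'nn : ∀ x, 0 ≤ ρ' x := by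
            intro x
            by_cases hx : x = i
            · subst hx; rw [hρ'def, Function.update_self]; linarith
            · rw [hρ'def, Function.update_of_ne hx]; exact hρ x
          have hκ'nn : ∀ x, 0 ≤ κ' x := by
            intro x
            by_cases hx : x = j
            · subst hx; rw [hκ'def, Function.update_self]; linarith
            · rw [hκ'def, Function.update_of_ne hx]; exact hκ x
          have hle' : ∀ l, ρ' l + κ' l ≤ ∑ x, ρ' x := by
            intro l
            rw [hρ'sum]
            by_cases hli : l = i
            · subst hli
              rw [hρ'def, hκ'def, Function.update_self, Function.update_of_ne (Ne.symm hji)]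
              have := hle l
              linarith
            · by_cases hlj : l = j
              · subst hlj
                rw [hρ'def, hκ'def, Function.update_of_ne hli, Function.update_self]
                have := hle l
                linarith
              · have hls : l ∈ s := by
                  rw [hs]
                  exact Finset.mem_erase.mpr ⟨hlj, Finset.mem_erase.mpr ⟨hli, Finset.mem_univ l⟩⟩
                rw [hρ'def, hκ'def, Function.update_of_ne hli, Function.update_of_ne hlj]
                have := hex l hls
                linarith
          have hcard' : (Finset.univ.filter (fun l => ρ' l ≠ 0)).card
              + (Finset.univ.filter (fun l => κ' l ≠ 0)).card ≤ d := by
            have hiA : i ∈ Finset.univ.filter (fun l => ρ l ≠ 0) := by simp [hi]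
            have hjB : j ∈ Finset.univ.filter (fun l => κ l ≠ 0) := by simp [hjκ]
            rcases min_cases (ρ i) (κ j) with ⟨he, _⟩ | ⟨he, _⟩
            · -- t = ρ i, so ρ' i = 0
              have hsub1 : Finset.univ.filter (fun l => ρ' l ≠ 0)
                  ⊆ (Finset.univ.filter (fun l => ρ l ≠ 0)).erase i := by
                intro l hl
                simp only [Finset.mem_filter, Finset.mem_univ, true_and] at hl
                by_cases hli : l = i
                · exfalso; apply hl
                  have hteq : t = ρ i := he
                  rw [hli, hρ'def, Function.update_self, hteq]; ring
                · rw [hρ'def, Function.update_of_ne hli] at hl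
                  exact Finset.mem_erase.mpr ⟨hli, by simp [hl]⟩
              have hsub2 : Finset.univ.filter (fun l => κ' l ≠ 0)
                  ⊆ Finset.univ.filter (fun l => κ l ≠ 0) := by
                intro l hl
                simp only [Finset.mem_filter, Finset.mem_univ, true_and] at hl ⊢
                by_cases hlj : l = j
                · subst hlj; exact hjκ
                · rw [hκ'def, Function.update_of_ne hlj] at hl; exact hl
              have h1 := Finset.card_le_card hsub1
              have h2 := Finset.card_le_card hsub2
              rw [Finset.card_erase_of_mem hiA] at h1
              have hpos := Finset.card_pos.mpr ⟨i, hiA⟩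
              omega
            · -- t = κ j, so κ' j = 0
              have hsub1 : Finset.univ.filter (fun l => ρ' l ≠ 0)
                  ⊆ Finset.univ.filter (fun l => ρ l ≠ 0) := by
                intro l hl
                simp only [Finset.mem_filter, Finset.mem_univ, true_and] at hl ⊢
                by_cases hli : l = i
                · subst hli; exact hi
                · rw [hρ'def, Function.update_of_ne hli] at hl; exact hl
              have hsub2 : Finset.univ.filter (fun l => κ' l ≠ 0)
                  ⊆ (Finset.univ.filter (fun l => κ l ≠ 0)).erase j := by
                intro l hl
                simp only [Finset.mem_filter, Finset.mem_univ, true_and] at hl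
                by_cases hlj : l = j
                · exfalso; apply hl
                  have hteq : t = κ j := he
                  rw [hlj, hκ'def, Function.update_self, hteq]; ring
                · rw [hκ'def, Function.update_of_ne hlj] at hl
                  exact Finset.mem_erase.mpr ⟨hlj, by simp [hl]⟩
              have h1 := Finset.card_le_card hsub1
              have h2 := Finset.card_le_card hsub2
              rw [Finset.card_erase_of_mem hjB] at h2
              have hpos := Finset.card_pos.mpr ⟨j, hjB⟩
              omega
          obtain ⟨p', hp'nn, hp'diag, hp'row, hp'col⟩ :=
            ih ρ' κ' hcard' hρ'nn hκ'nn (hρ'sum.trans hκ'sum.symm) hle'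
          rw [hρ'def] at hp'row
          rw [hκ'def] at hp'col
          exact add_edge ρ κ i j hji t (le_of_lt hm0pos) p' hp'nn hp'diag hp'row hp'col

/-- Transportation with forbidden diagonal: margins `ρ` (rows), `κ` (columns),
feasible when `ρ i + κ i ≤ M` for every `i`. -/
lemma transport {n : ℕ} (ρ κ : Fin n → ℝ) (hρ : ∀ i, 0 ≤ ρ i) (hκ : ∀ i, 0 ≤ κ i)
    (hsum : ∑ i, ρ i = ∑ i, κ i) (hle : ∀ i, ρ i + κ i ≤ ∑ i, ρ i) :
    ∃ p : Fin n → Fin n → ℝ, (∀ i j, 0 ≤ p i j) ∧ (∀ i, p i i = 0) ∧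
      (∀ i, ∑ j, p i j = ρ i) ∧ (∀ j, ∑ i, p i j = κ j) :=
  transport_aux ((Finset.univ.filter (fun i => ρ i ≠ 0)).card
    + (Finset.univ.filter (fun i => κ i ≠ 0)).card) ρ κ le_rfl hρ hκ hsum hle


open Finset in
private lemma sum_pPlus_eq_sum_pMinus {n : ℕ} (p : Fin n → Fin n → ℝ) (hPM : isPayMatrix p) :
    ∑ i, pPlus p i = ∑ i, pMinus p i := by
  have h1 : ∀ i, pPlus p i = ∑ j, p j i := by
    intro i
    rw [pPlus, Finset.sum_erase_eq_sub (Finset.mem_univ i), hPM.2 i, sub_zero]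
  have h2 : ∀ i, pMinus p i = ∑ j, p i j := by
    intro i
    rw [pMinus, Finset.sum_erase_eq_sub (Finset.mem_univ i), hPM.2 i, sub_zero]
  rw [Finset.sum_congr rfl (fun i _ => h1 i), Finset.sum_congr rfl (fun i _ => h2 i)]
  exact Finset.sum_comm

private lemma sum_util_eq {n k : ℕ} (X : Fin n → Finset (Fin k)) (r : Fin n → ℕ)
    (p : Fin n → Fin n → ℝ) (hPM : isPayMatrix p) :
    ∑ i, util X r p i = (∑ i, ((Xbar X i).card : ℝ)) - (rSum Finset.univ r : ℝ) := by
  have : ∑ i, util X r p i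
      = (∑ i, pPlus p i - ∑ i, pMinus p i) + ((∑ i, ((Xbar X i).card : ℝ)) - ∑ i, (r i : ℝ)) := by
    simp only [util]
    rw [← Finset.sum_sub_distrib, ← Finset.sum_sub_distrib, ← Finset.sum_add_distrib]
    apply Finset.sum_congr rfl
    intro i _
    ring
  rw [this, sum_pPlus_eq_sum_pMinus p hPM, sub_self, zero_add]
  congr 1
  rw [rSum]
  push_cast
  rfl

private lemma cutCard_singleton {n k : ℕ} (X : Fin n → Finset (Fin k)) (i : Fin n) :
    cutCard X {i} = (Xbar X i).card := by
  unfold cutCard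
  congr 1
  ext x
  simp

/-- From the cut-set conditions: `|X̄_i| + r_i ≤ r_N` for every `i`, when `n ≥ 2`. -/
private lemma card_add_le_rSum {n k : ℕ} (hn : 2 ≤ n) (X : Fin n → Finset (Fin k))
    (r : Fin n → ℕ) (hr : rateOK X Finset.univ r) (i : Fin n) :
    (Xbar X i).card + r i ≤ rSum Finset.univ r := by
  have hne : (Finset.univ.erase i).Nonempty := by
    obtain ⟨j, hj⟩ := Finset.exists_mem_ne (by rw [Finset.card_univ, Fintype.card_fin]; omega) i
    exact ⟨j, Finset.mem_erase.mpr ⟨hj.2, Finset.mem_univ j⟩⟩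
  have hss : Finset.univ.erase i ⊂ Finset.univ := Finset.erase_ssubset (Finset.mem_univ i)
  have := hr.2 (Finset.univ.erase i) hne hss
  have hsd : Finset.univ \ Finset.univ.erase i = {i} := by
    ext x
    simp [Finset.mem_sdiff]
  rw [hsd, cutCard_singleton] at this
  have hsum : rSum (Finset.univ.erase i) r + r i = rSum Finset.univ r := by
    rw [rSum, rSum, Finset.sum_erase_add _ _ (Finset.mem_univ i)]
  omega

private lemma max_split (x : ℝ) : max x 0 = x + max (-x) 0 := by
  rcases le_total 0 x with hx | hx
  · rw [max_eq_left hx, max_eq_right (neg_nonpos.mpr hx), add_zero]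
  · rw [max_eq_right hx, max_eq_left (neg_nonneg.mpr hx)]
    ring

/-- Key step: any optimal pair has minimum sum-rate. -/
private lemma optimal_rSum_eq {n k : ℕ} (hn : 2 ≤ n)
    (X : Fin n → Finset (Fin k))
    (rstar : ℕ)
    (hstar : IsLeast {m | ∃ r : Fin n → ℕ, rateOK X Finset.univ r ∧ rSum Finset.univ r = m} rstar)
    (r : Fin n → ℕ) (p : Fin n → Fin n → ℝ) (hopt : optimal X r p) :
    rSum Finset.univ r = rstar := by
  obtain ⟨hfeas, hnb⟩ := hopt
  obtain ⟨hrOK, hPM, hpOK, hrat, hnoblock⟩ := hfeas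
  have hge : rstar ≤ rSum Finset.univ r := hstar.2 ⟨r, hrOK, rfl⟩
  obtain ⟨rs, hrsOK, hrsSum⟩ := hstar.1
  -- the "imbalance" of each user under (r,p)
  set h : Fin n → ℝ := fun i => (r i : ℝ) - pPlus p i + pMinus p i with hdef
  set E : ℝ := ∑ i, max (-(h i)) 0 with hEdef
  set D : ℝ := (rSum Finset.univ r : ℝ) + E with hDdef
  set lam : ℝ := if D = 0 then 0 else ((rstar : ℝ) + E) / D with hlamdef
  set ρ : Fin n → ℝ := fun i => lam * max (h i) 0 with hρdef
  set κf : Fin n → ℝ := fun i => (rs i : ℝ) + max (-(h i)) 0 with hκdef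
  have hE0 : 0 ≤ E := Finset.sum_nonneg (fun i _ => le_max_right _ _)
  have hrsum0 : (0:ℝ) ≤ (rSum Finset.univ r : ℝ) := Nat.cast_nonneg _
  have hsumh : ∑ i, h i = (rSum Finset.univ r : ℝ) := by
    rw [hdef]
    rw [Finset.sum_add_distrib, Finset.sum_sub_distrib,
      sum_pPlus_eq_sum_pMinus p hPM]
    rw [rSum]
    push_cast
    ring
  have hsummaxh : ∑ i, max (h i) 0 = (rSum Finset.univ r : ℝ) + E := by
    rw [Finset.sum_congr rfl (fun i _ => max_split (h i)), Finset.sum_add_distrib, hsumh, hEdef]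
  have hlam0 : 0 ≤ lam := by
    rw [hlamdef]
    split
    · exact le_refl 0
    · apply div_nonneg
      · positivity
      · rw [hDdef]; positivity
  have hlam1 : lam ≤ 1 := by
    rw [hlamdef]
    split
    · exact zero_le_one
    · rename_i hD
      rw [div_le_one (lt_of_le_of_ne (by rw [hDdef]; positivity) (Ne.symm hD))]
      rw [hDdef]
      have : (rstar : ℝ) ≤ (rSum Finset.univ r : ℝ) := Nat.cast_le.mpr hge
      linarith
  have hρsum : ∑ i, ρ i = (rstar : ℝ) + E := by
    rw [hρdef]
    rw [← Finset.mul_sum, hsummaxh]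
    by_cases hD : D = 0
    · have h1 : (rSum Finset.univ r : ℝ) = 0 ∧ E = 0 := by
        constructor <;> [skip; skip] <;> rw [hDdef] at hD <;> linarith
      have h2 : (rstar : ℝ) = 0 := by
        have : (rstar : ℝ) ≤ (rSum Finset.univ r : ℝ) := Nat.cast_le.mpr hge
        have := Nat.cast_nonneg (α := ℝ) rstar
        linarith [h1.1]
      rw [h1.1, h1.2, h2]
      ring
    · rw [hlamdef, if_neg hD, hDdef]
      rw [hDdef] at hD
      field_simp
  have hκsum : ∑ i, κf i = (rstar : ℝ) + E := by
    rw [hκdef, Finset.sum_add_distrib, ← hEdef]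
    congr 1
    rw [← hrsSum, rSum]
    push_cast
    rfl
  have hρnn : ∀ i, 0 ≤ ρ i := fun i => mul_nonneg hlam0 (le_max_right _ _)
  have hκnn : ∀ i, 0 ≤ κf i := fun i => add_nonneg (Nat.cast_nonneg _) (le_max_right _ _)
  have hmaxh_le : ∀ i, max (h i) 0 ≤ ((Xbar X i).card : ℝ) := by
    intro i
    apply max_le
    · have h1 := (hrat i (Finset.mem_univ i)).1
      have h2 := (hrat i (Finset.mem_univ i)).2
      rw [hdef]
      dsimp only
      linarith
    · exact Nat.cast_nonneg _
  have hρle : ∀ i, ρ i ≤ ((Xbar X i).card : ℝ) := by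
    intro i
    rw [hρdef]
    calc lam * max (h i) 0 ≤ 1 * max (h i) 0 :=
          mul_le_mul_of_nonneg_right hlam1 (le_max_right _ _)
      _ = max (h i) 0 := one_mul _
      _ ≤ _ := hmaxh_le i
  have hcut : ∀ i, ((Xbar X i).card : ℝ) + (rs i : ℝ) ≤ (rstar : ℝ) := by
    intro i
    have := card_add_le_rSum hn X rs hrsOK i
    rw [hrsSum] at this
    exact_mod_cast this
  have hEsingle : ∀ i, max (-(h i)) 0 ≤ E := by
    intro i
    rw [hEdef]
    exact Finset.single_le_sum (f := fun i => max (-(h i)) 0)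
      (fun j _ => le_max_right _ _) (Finset.mem_univ i)
  have htrle : ∀ i, ρ i + κf i ≤ ∑ i, ρ i := by
    intro i
    rw [hρsum, hκdef]
    have := hρle i
    have := hcut i
    have := hEsingle i
    dsimp only
    linarith
  obtain ⟨ps, hpsnn, hpsdiag, hpsrow, hpscol⟩ :=
    transport ρ κf hρnn hκnn (hρsum.trans hκsum.symm) htrle
  have hpsPlus : ∀ i, pPlus ps i = κf i := by
    intro i
    rw [pPlus, Finset.sum_erase_eq_sub (Finset.mem_univ i), hpsdiag i, sub_zero, hpscol i]
  have hpsMinus : ∀ i, pMinus ps i = ρ i := by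
    intro i
    rw [pMinus, Finset.sum_erase_eq_sub (Finset.mem_univ i), hpsdiag i, sub_zero, hpsrow i]
  have hutil : ∀ i, util X r p i ≤ util X rs ps i := by
    intro i
    rw [util, util, hpsPlus i, hpsMinus i, hρdef, hκdef]
    have hs := max_split (h i)
    have h1 : pPlus p i - (r i : ℝ) + (((Xbar X i).card : ℝ) - pMinus p i)
        = -(h i) + ((Xbar X i).card : ℝ) := by rw [hdef]; ring
    rw [h1]
    dsimp only
    nlinarith [le_max_right (h i) (0:ℝ), hlam1]
  have hfeas' : feasible X rs ps := by
    refine ⟨hrsOK, ⟨hpsnn, hpsdiag⟩, ?_, ?_, ?_⟩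
    · intro i _ j hj
      exact absurd (Finset.mem_univ j) hj
    · intro i _
      constructor
      · rw [hpsPlus i, hκdef]
        dsimp only
        linarith [le_max_right (-(h i)) (0:ℝ)]
      · rw [hpsMinus i]
        exact hρle i
    · rintro ⟨S, r2, p2, hS, hcoal, hr2, hp2, hpo2, hra2, hdom, i0, hi0, hstr⟩
      exact hnoblock ⟨S, r2, p2, hS, hcoal, hr2, hp2, hpo2, hra2,
        fun i hiS => le_trans (hutil i) (hdom i hiS),
        i0, hi0, lt_of_le_of_lt (hutil i0) hstr⟩
  by_contra hne
  exact hnb ⟨rs, ps, hfeas', Or.inl (by omega)⟩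

/-- Any two optimal rate–payment pairs have equal total utility, equal to
`∑_{i∈N} |X̄_i| − r*_N`, where `r*_N` is the minimum sum-rate over `𝓡_N`. -/
theorem optimal_sum_utility_eq (n k : ℕ) (hn : 2 ≤ n) (hk : 1 ≤ k)
    (X : Fin n → Finset (Fin k)) (hX : isCoalition X Finset.univ)
    (rstar : ℕ)
    (hstar : IsLeast {m | ∃ r : Fin n → ℕ, rateOK X Finset.univ r ∧ rSum Finset.univ r = m} rstar)
    (r : Fin n → ℕ) (p : Fin n → Fin n → ℝ) (hopt : optimal X r p)
    (r' : Fin n → ℕ) (p' : Fin n → Fin n → ℝ) (hopt' : optimal X r' p') :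
    ∑ i, util X r p i = ∑ i, util X r' p' i ∧
    ∑ i, util X r p i = (∑ i, ((Xbar X i).card : ℝ)) - (rstar : ℝ) := by
  have h1 := optimal_rSum_eq hn X rstar hstar r p hopt
  have h2 := optimal_rSum_eq hn X rstar hstar r' p' hopt'
  have s1 := sum_util_eq X r p hopt.1.2.1
  have s2 := sum_util_eq X r' p' hopt'.1.2.1
  constructor
  · rw [s1, s2, h1, h2]
  · rw [s1, h1]
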